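/- For all a, b ∈ Z_{≥0}, one has ∑_{i = max(0, b-a)}^{b} q^{(a-1)(b-i)} C_i(q) [a choose b-i]_q = q^{2ab}, where C_i(q) = ∏_{k=i+1}^{b} (q^{2k} - 1) for i < b and C_b(q) = 1. -/

import Mathlib

/-!
Put `x = q²`. The balanced coefficient is `[a choose j] = q^(-j(a-j)) G(a, j)`, where
`G = gaussBinom x` is the ordinary Gaussian binomial with Pascal rule
`G(n+1, k+1) = G(n, k) + x^(k+1) G(n, k+1)`: both are quotients of factorials, and
`[k] (q² - 1) q^(k-1) = x^k - 1`. Since `∏_{k<j} (x^b - x^k) = q^(j(j-1)) C_{b-j}(q)`,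
the summand with `i = b - j` becomes `G(a, j) ∏_{k<j} (x^b - x^k)`. The sum is therefore the
q-Newton expansion `t^a = ∑_j G(a, j) ∏_{k<j} (t - x^k)` at `t = x^b`, whose terms with `j > b`
vanish.
-/

noncomputable section

/-- The field `ℚ(q)` of rational functions. -/
abbrev K : Type := RatFunc ℚ

/-- The indeterminate `q`. -/
def q : K := RatFunc.X

/-- The balanced quantum integer `[k] = (q^k - q^{-k})/(q - q⁻¹)`. -/
def qint (k : ℤ) : K := (q ^ k - q ^ (-k)) / (q - q⁻¹)

/-- The quantum factorial `[k]! = [1][2]⋯[k]`. -/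
def qfact : ℕ → K
  | 0 => 1
  | k + 1 => qfact k * qint ((k : ℤ) + 1)

/-- The Gaussian binomial coefficient `[c choose d] = [c]!/([c-d]![d]!)` for `c ≥ d ≥ 0`,
and `0` otherwise. -/
def qbinom (c d : ℤ) : K :=
  if d ≤ c ∧ 0 ≤ d then qfact c.toNat / (qfact (c - d).toNat * qfact d.toNat) else 0

open Finset

section GaussBinom

variable {R : Type*} [CommRing R] (x : R)

def gaussBinom : ℕ → ℕ → R
  | _, 0 => 1
  | 0, _ + 1 => 0
  | n + 1, k + 1 => gaussBinom n k + x ^ (k + 1) * gaussBinom n (k + 1)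

@[simp]
theorem gaussBinom_zero_right (n : ℕ) : gaussBinom x n 0 = 1 := by
  cases n <;> rfl

theorem gaussBinom_succ_succ (n k : ℕ) :
    gaussBinom x (n + 1) (k + 1) = gaussBinom x n k + x ^ (k + 1) * gaussBinom x n (k + 1) :=
  rfl

theorem gaussBinom_of_lt {n k : ℕ} (h : n < k) : gaussBinom x n k = 0 := by
  induction n generalizing k with
  | zero => obtain ⟨k, rfl⟩ := Nat.exists_eq_add_of_lt h; rfl
  | succ n ih =>
    obtain ⟨k, rfl⟩ := Nat.exists_eq_add_of_lt h
    rw [gaussBinom_succ_succ, ih (by omega), ih (by omega), mul_zero, add_zero]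

@[simp]
theorem gaussBinom_self (n : ℕ) : gaussBinom x n n = 1 := by
  induction n with
  | zero => rfl
  | succ n ih =>
    rw [gaussBinom_succ_succ, ih, gaussBinom_of_lt x n.lt_succ_self, mul_zero, add_zero]

theorem pow_eq_sum_gaussBinom_mul_prod (t : R) (n : ℕ) :
    t ^ n = ∑ j ∈ range (n + 1), gaussBinom x n j * ∏ k ∈ range j, (t - x ^ k) := by
  induction n with
  | zero => simp
  | succ n ih =>
    have h_mul : ∀ j, t * ∏ k ∈ range j, (t - x ^ k) =
        ∏ k ∈ range (j + 1), (t - x ^ k) + x ^ j * ∏ k ∈ range j, (t - x ^ k) := by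
      intro j
      rw [prod_range_succ]
      ring
    have h_shift : ∑ j ∈ range (n + 1), x ^ (j + 1) * gaussBinom x n (j + 1) *
          ∏ k ∈ range (j + 1), (t - x ^ k) + 1 =
        ∑ j ∈ range (n + 1), x ^ j * gaussBinom x n j * ∏ k ∈ range j, (t - x ^ k) := by
      have := sum_range_succ' (fun j => x ^ j * gaussBinom x n j * ∏ k ∈ range j, (t - x ^ k))
        (n + 1)
      rw [sum_range_succ, gaussBinom_of_lt x n.lt_succ_self] at this
      simpa using this.symm
    calc t ^ (n + 1)
      _ = ∑ j ∈ range (n + 1), t * (gaussBinom x n j * ∏ k ∈ range j, (t - x ^ k)) := by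
          rw [pow_succ', ih, mul_sum]
      _ = ∑ j ∈ range (n + 1), gaussBinom x n j * ∏ k ∈ range (j + 1), (t - x ^ k) +
          (∑ j ∈ range (n + 1), x ^ (j + 1) * gaussBinom x n (j + 1) *
            ∏ k ∈ range (j + 1), (t - x ^ k) + 1) := by
          rw [h_shift, ← sum_add_distrib]
          refine sum_congr rfl fun j _ => ?_
          rw [mul_left_comm, h_mul]
          ring
      _ = ∑ j ∈ range (n + 1 + 1), gaussBinom x (n + 1) j * ∏ k ∈ range j, (t - x ^ k) := by
          rw [sum_range_succ' _ (n + 1)]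
          simp only [gaussBinom_succ_succ, add_mul, sum_add_distrib, gaussBinom_zero_right,
            prod_range_zero, mul_one]
          ring

theorem gaussBinom_add_mul_prod_mul_prod (n k : ℕ) :
    gaussBinom x (n + k) k * (∏ i ∈ range k, (x ^ (i + 1) - 1)) *
        ∏ i ∈ range n, (x ^ (i + 1) - 1) =
      ∏ i ∈ range (n + k), (x ^ (i + 1) - 1) := by
  induction k generalizing n with
  | zero => simp
  | succ k ihk =>
    induction n with
    | zero => simp
    | succ n ihn =>
      have h₁ := ihk (n + 1)
      rw [show n + 1 + k = n + k + 1 by ring, prod_range_succ _ n] at h₁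
      rw [← add_assoc, prod_range_succ _ k] at ihn
      rw [show n + 1 + (k + 1) = n + k + 1 + 1 by ring, gaussBinom_succ_succ, prod_range_succ _ k,
        prod_range_succ _ n, prod_range_succ _ (n + k + 1)]
      linear_combination (x ^ (k + 1) - 1) * h₁ + x ^ (k + 1) * (x ^ (n + 1) - 1) * ihn

theorem prod_range_pow_sub_pow {b j : ℕ} (h : j ≤ b) :
    ∏ k ∈ range j, (x ^ b - x ^ k) =
      x ^ (∑ k ∈ range j, k) * ∏ k ∈ Icc (b - j + 1) b, (x ^ k - 1) := by
  have h_factor : ∀ k ∈ range j, x ^ b - x ^ k = x ^ k * (x ^ (b - k) - 1) := by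
    intro k hk
    rw [mul_sub, mul_one, ← pow_add, Nat.add_sub_cancel' (by simp at hk; omega)]
  rw [prod_congr rfl h_factor, prod_mul_distrib, prod_pow_eq_pow_sum, ← Nat.Ico_zero_eq_range,
    prod_Ico_reflect (fun k => x ^ k - 1) 0 (by omega), Nat.sub_zero, ← Ico_add_one_right_eq_Icc,
    show b + 1 - j = b - j + 1 by omega]

end GaussBinom

theorem q_ne_zero : q ≠ 0 := RatFunc.X_ne_zero

theorem q_pow_sub_one_ne_zero {m : ℕ} (hm : m ≠ 0) : q ^ m - 1 ≠ 0 := by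
  have h := Polynomial.X_pow_sub_C_ne_zero (Nat.pos_of_ne_zero hm) (1 : ℚ)
  rw [← map_ne_zero_iff _ (RatFunc.algebraMap_injective ℚ)] at h
  simpa [q, RatFunc.algebraMap_X] using h

theorem qint_succ_mul (k : ℕ) :
    qint ((k : ℤ) + 1) * (q ^ 2 - 1) * q ^ k = (q ^ 2) ^ (k + 1) - 1 := by
  have h : q ^ 2 - 1 ≠ 0 := q_pow_sub_one_ne_zero two_ne_zero
  rw [qint, zpow_neg, ← Nat.cast_add_one, zpow_natCast]
  field_simp [q_ne_zero]
  ring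

theorem qfact_mul_pow_mul_pow (n : ℕ) :
    qfact n * (q ^ 2 - 1) ^ n * q ^ (∑ k ∈ range n, k) =
      ∏ k ∈ range n, ((q ^ 2) ^ (k + 1) - 1) := by
  induction n with
  | zero => simp [qfact]
  | succ n ih =>
    rw [qfact, sum_range_succ, prod_range_succ, pow_succ, pow_add]
    linear_combination ((q ^ 2) ^ (n + 1) - 1) * ih +
      qfact n * (q ^ 2 - 1) ^ n * q ^ (∑ k ∈ range n, k) * qint_succ_mul n

theorem qfact_ne_zero (n : ℕ) : qfact n ≠ 0 := by
  have h := qfact_mul_pow_mul_pow n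
  refine left_ne_zero_of_mul (left_ne_zero_of_mul (h ▸ prod_ne_zero_iff.mpr fun k _ => ?_))
  rw [← pow_mul]
  exact q_pow_sub_one_ne_zero (by omega)

theorem qbinom_natCast_add (n j : ℕ) :
    qbinom ((n + j : ℕ) : ℤ) j = qfact (n + j) / (qfact n * qfact j) := by
  rw [qbinom, if_pos (by omega), Int.toNat_natCast, Nat.cast_add, add_sub_cancel_right,
    Int.toNat_natCast, Int.toNat_natCast]

theorem pow_mul_qbinom_eq_gaussBinom (n j : ℕ) :
    q ^ (n * j) * qbinom ((n + j : ℕ) : ℤ) j = gaussBinom (q ^ 2) (n + j) j := by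
  have h := gaussBinom_add_mul_prod_mul_prod (q ^ 2) n j
  have h_sum :
      ∑ k ∈ range (n + j), k = ∑ k ∈ range n, k + ∑ k ∈ range j, k + n * j := by
    rw [sum_range_add, sum_add_distrib, sum_const, card_range, smul_eq_mul]
    ring
  rw [← qfact_mul_pow_mul_pow, ← qfact_mul_pow_mul_pow, ← qfact_mul_pow_mul_pow, h_sum] at h
  simp only [pow_add] at h
  have h_ne : (q ^ 2 - 1) ^ n * (q ^ 2 - 1) ^ j * q ^ (∑ k ∈ range n, k) *
      q ^ (∑ k ∈ range j, k) ≠ 0 := by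
    simp [q_ne_zero, q_pow_sub_one_ne_zero two_ne_zero]
  rw [qbinom_natCast_add, mul_div_assoc',
    div_eq_iff (mul_ne_zero (qfact_ne_zero n) (qfact_ne_zero j))]
  apply mul_right_cancel₀ h_ne
  linear_combination -h

theorem qbinom_summand_eq {a b j : ℕ} (ha : j ≤ a) (hb : j ≤ b) :
    q ^ (((a : ℤ) - 1) * ((b : ℤ) - ((b - j : ℕ) : ℤ))) *
        (∏ k ∈ Icc (b - j + 1) b, (q ^ (2 * k) - 1)) *
        qbinom (a : ℤ) ((b : ℤ) - ((b - j : ℕ) : ℤ)) =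
      gaussBinom (q ^ 2) a j * ∏ k ∈ range j, ((q ^ 2) ^ b - (q ^ 2) ^ k) := by
  obtain ⟨n, rfl⟩ := Nat.exists_eq_add_of_le' ha
  have h_j : (b : ℤ) - ((b - j : ℕ) : ℤ) = j := by omega
  have h_exp :
      (((n + j : ℕ) : ℤ) - 1) * j = ((n * j + 2 * ∑ k ∈ range j, k : ℕ) : ℤ) := by
    have h := sum_range_id_mul_two j
    rcases j with _ | j
    · simp
    · rw [Nat.add_sub_cancel] at h
      push_cast [mul_comm 2, h]
      ring
  simp_rw [pow_mul q 2]
  rw [h_j, h_exp, zpow_natCast, prod_range_pow_sub_pow _ hb, ← pow_mul_qbinom_eq_gaussBinom,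
    pow_add, pow_mul]
  ring

theorem sum_Icc_sub_eq_sum_range {M : Type*} [AddCommMonoid M] (f : ℕ → M) (a b : ℕ) :
    ∑ i ∈ Icc (b - a) b, f i = ∑ j ∈ range (min a b + 1), f (b - j) := by
  rw [← Nat.Ico_zero_eq_range, sum_Ico_reflect f 0 (by omega), Nat.sub_zero,
    ← Ico_add_one_right_eq_Icc]
  congr 2
  omega

/-- Lemma A.2: `∑_{i=max(0,b-a)}^{b} q^{(a-1)(b-i)} C_i(q) [a choose b-i] = q^{2ab}`, where
`C_i(q) = ∏_{k=i+1}^{b} (q^{2k} - 1)` (with `C_b(q) = 1`). -/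
theorem sum_qbinom_identity (a b : ℕ) :
    ∑ i ∈ Finset.Icc (b - a) b,
        q ^ (((a : ℤ) - 1) * ((b : ℤ) - (i : ℤ))) *
          (∏ k ∈ Finset.Icc (i + 1) b, (q ^ (2 * k) - 1)) *
          qbinom (a : ℤ) ((b : ℤ) - (i : ℤ))
      = q ^ (2 * a * b) := by
  set g : ℕ → K := fun j =>
    gaussBinom (q ^ 2) a j * ∏ k ∈ range j, ((q ^ 2) ^ b - (q ^ 2) ^ k)
  calc _ = ∑ j ∈ range (min a b + 1), g j := by
        rw [sum_Icc_sub_eq_sum_range]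
        refine sum_congr rfl fun j hj => ?_
        rw [mem_range, Nat.lt_succ_iff, le_min_iff] at hj
        exact qbinom_summand_eq hj.1 hj.2
    _ = ∑ j ∈ range (a + 1), g j := by
        refine sum_subset (range_subset_range.mpr (by omega)) fun j hja hjab => ?_
        have hbj : b ∈ range j := mem_range.mpr (by simp only [mem_range] at hja hjab; omega)
        exact mul_eq_zero_of_right _ (prod_eq_zero hbj (sub_self _))
    _ = q ^ (2 * a * b) := by
        rw [← pow_eq_sum_gaussBinom_mul_prod, ← pow_mul, ← pow_mul]
        ring_nf

end
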